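/- arXiv:2401.16199 — 5 statements merged into one kernel-verified Lean document; each statement's English description precedes it below -/
import Mathlib

section
/- Let M be an n-by-n real positive semidefinite matrix. Then the Hadamard (entrywise) product M ∘ M satisfies M ∘ M ⪰ (1/n) · d dᵀ, where d = diag M is the vector of diagonal entries of M; that is, M ∘ M − (1/n) d dᵀ is positive semidefinite. -/
/-- Vybíral's theorem: for a positive semidefinite `M`, the Hadamard square `M ∘ M`
dominates `(1/n) (diag M)(diag M)ᵀ` in the Loewner order. -/
theorem stmt1 (n : ℕ) (M : Matrix (Fin n) (Fin n) ℝ) (hM : M.PosSemidef) :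
    (Matrix.of fun j k => M j k ^ 2 - (1 / (n : ℝ)) * (M j j * M k k)).PosSemidef := by
  obtain ⟨B, hB⟩ : ∃ B : Matrix (Fin n) (Fin n) ℝ, M = Matrix.conjTranspose B * B :=
    by open scoped MatrixOrder Matrix.Norms.L2Operator in exact CStarAlgebra.nonneg_iff_eq_star_mul_self.mp hM.nonneg
  have hMe : ∀ j k, M j k = ∑ i, B i j * B i k := by
    intro j k
    rw [hB]
    simp [Matrix.mul_apply, Matrix.conjTranspose_apply]
  have hsym : ∀ j k, M j k = M k j := by
    intro j k
    simp [hMe, mul_comm]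
  rw [Matrix.posSemidef_iff_dotProduct_mulVec]
  constructor
  · ext j k
    simp [Matrix.conjTranspose_apply, hsym j k, mul_comm]
  · intro x
    simp only [star_trivial, dotProduct, Matrix.mulVec, dotProduct,
      Matrix.of_apply]
    have sum4 : ∀ f : Fin n → Fin n → Fin n → Fin n → ℝ,
        ∑ j, ∑ k, ∑ i, ∑ i', f j k i i' = ∑ i, ∑ i', ∑ j, ∑ k, f j k i i' := by
      intro f
      calc ∑ j, ∑ k, ∑ i, ∑ i', f j k i i'
          = ∑ j, ∑ i, ∑ k, ∑ i', f j k i i' :=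
            Finset.sum_congr rfl fun _ _ => Finset.sum_comm
        _ = ∑ i, ∑ j, ∑ k, ∑ i', f j k i i' := Finset.sum_comm
        _ = ∑ i, ∑ j, ∑ i', ∑ k, f j k i i' :=
            Finset.sum_congr rfl fun _ _ => Finset.sum_congr rfl fun _ _ => Finset.sum_comm
        _ = ∑ i, ∑ i', ∑ j, ∑ k, f j k i i' :=
            Finset.sum_congr rfl fun _ _ => Finset.sum_comm
    set C : Fin n → Fin n → ℝ := fun i i' => ∑ j, x j * (B i j * B i' j) with hC
    have e1 : ∀ j k, x j * (M j k ^ 2 * x k)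
        = ∑ i, ∑ i', (x j * (B i j * B i' j)) * (x k * (B i k * B i' k)) := by
      intro j k
      rw [hMe, sq, Finset.sum_mul_sum]
      simp only [Finset.sum_mul, Finset.mul_sum]
      refine Finset.sum_congr rfl fun i _ => Finset.sum_congr rfl fun i' _ => ?_
      ring
    have key1 : ∑ j, x j * ∑ k, M j k ^ 2 * x k = ∑ i, ∑ i', (C i i') ^ 2 := by
      calc ∑ j, x j * ∑ k, M j k ^ 2 * x k
          = ∑ j, ∑ k, ∑ i, ∑ i', (x j * (B i j * B i' j)) * (x k * (B i k * B i' k)) := by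
            simp only [Finset.mul_sum]
            exact Finset.sum_congr rfl fun j _ => Finset.sum_congr rfl fun k _ => e1 j k
        _ = ∑ i, ∑ i', ∑ j, ∑ k, (x j * (B i j * B i' j)) * (x k * (B i k * B i' k)) :=
            sum4 _
        _ = ∑ i, ∑ i', (C i i') ^ 2 := by
            refine Finset.sum_congr rfl fun i _ => Finset.sum_congr rfl fun i' _ => ?_
            rw [hC, sq, Finset.sum_mul_sum]
    have key2 : ∑ j, x j * M j j = ∑ i, C i i := by
      simp only [hC, hMe, Finset.mul_sum]
      rw [Finset.sum_comm]
    have e2 : ∑ j, x j * ∑ k, (1 / (n : ℝ) * (M j j * M k k)) * x k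
        = 1 / (n : ℝ) * (∑ j, x j * M j j) ^ 2 := by
      rw [sq, Finset.sum_mul_sum, Finset.mul_sum]
      refine Finset.sum_congr rfl fun j _ => ?_
      rw [Finset.mul_sum, Finset.mul_sum]
      refine Finset.sum_congr rfl fun k _ => ?_
      ring
    have cs : (∑ i, C i i) ^ 2 ≤ (n : ℝ) * ∑ i, (C i i) ^ 2 := by
      have := Finset.sum_mul_sq_le_sq_mul_sq Finset.univ (fun _ : Fin n => (1 : ℝ))
        (fun i => C i i)
      simpa using this
    have hle : ∑ i, (C i i) ^ 2 ≤ ∑ i, ∑ i', (C i i') ^ 2 := by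
      apply Finset.sum_le_sum
      intro i _
      exact Finset.single_le_sum (fun i' _ => sq_nonneg (C i i')) (Finset.mem_univ i)
    have expand : ∑ j, x j * ∑ k, (M j k ^ 2 - 1 / (n : ℝ) * (M j j * M k k)) * x k
        = (∑ j, x j * ∑ k, M j k ^ 2 * x k)
          - ∑ j, x j * ∑ k, (1 / (n : ℝ) * (M j j * M k k)) * x k := by
      simp only [sub_mul, Finset.sum_sub_distrib, mul_sub]
    rw [expand, e2, key1, key2, sub_nonneg]
    rcases Nat.eq_zero_or_pos n with hn | hn
    · subst hn; simp
    · have hn' : (0 : ℝ) < n := by exact_mod_cast hn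
      rw [div_mul_eq_mul_div, one_mul, div_le_iff₀ hn', mul_comm]
      calc (∑ i, C i i) ^ 2 ≤ (n : ℝ) * ∑ i, (C i i) ^ 2 := cs
        _ ≤ (n : ℝ) * ∑ i, ∑ i', (C i i') ^ 2 :=
            mul_le_mul_of_nonneg_left hle (by positivity)
end

section
/- If M and N are n-by-n real positive semidefinite matrices, then the matrix with entries M_{jk}² + N_{jk}² − (M_{jj}M_{kk} + N_{jj}N_{kk})/n is positive semidefinite. -/
open Finset Matrix in
lemma key (n : ℕ) (M : Matrix (Fin n) (Fin n) ℝ) (hM : M.PosSemidef) (c : Fin n → ℝ) :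
    (∑ j, c j * M j j) ^ 2 / n ≤ ∑ j, ∑ k, c j * c k * M j k ^ 2 := by
  rcases Nat.eq_zero_or_pos n with h | h
  · subst h; simp
  obtain ⟨B, rfl⟩ : ∃ B : Matrix (Fin n) (Fin n) ℝ, M = Bᴴ * B := by
    open scoped MatrixOrder in
    obtain ⟨a, rfl⟩ := CStarAlgebra.nonneg_iff_eq_star_mul_self.mp hM.nonneg
    exact ⟨a, rfl⟩
  set T : Fin n → Fin n → ℝ := fun p q => ∑ j, c j * B p j * B q j with hT
  have entry : ∀ j k, (Bᴴ * B) j k = ∑ p, B p j * B p k := by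
    intro j k; simp [Matrix.mul_apply, Matrix.conjTranspose_apply]
  have claim1 : ∑ j, c j * (Bᴴ * B) j j = ∑ p, T p p := by
    simp_rw [entry, hT, Finset.mul_sum]
    rw [Finset.sum_comm]
    congr 1; ext p; congr 1; ext j; ring
  have swap4 : ∀ (G : Fin n → Fin n → Fin n → Fin n → ℝ),
      ∑ j, ∑ k, ∑ p, ∑ q, G j k p q = ∑ p, ∑ q, ∑ j, ∑ k, G j k p q := by
    intro G
    rw [show (∑ j, ∑ k, ∑ p, ∑ q, G j k p q)
        = ∑ jk : Fin n × Fin n, ∑ pq : Fin n × Fin n, G jk.1 jk.2 pq.1 pq.2 by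
      simp [Fintype.sum_prod_type], Finset.sum_comm]
    simp [Fintype.sum_prod_type]
  have expandL : ∀ j k, c j * c k * (Bᴴ * B) j k ^ 2
      = ∑ p, ∑ q, (c j * B p j * B q j) * (c k * B p k * B q k) := by
    intro j k
    rw [entry, sq, Finset.sum_mul_sum, Finset.mul_sum]
    refine Finset.sum_congr rfl fun p _ => ?_
    rw [Finset.mul_sum]
    refine Finset.sum_congr rfl fun q _ => ?_
    ring
  have expandR : ∀ p q, T p q ^ 2
      = ∑ j, ∑ k, (c j * B p j * B q j) * (c k * B p k * B q k) := by
    intro p q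
    rw [hT, sq, Finset.sum_mul_sum]
  have claim2 : ∑ j, ∑ k, c j * c k * (Bᴴ * B) j k ^ 2 = ∑ p, ∑ q, T p q ^ 2 := by
    simp_rw [expandL, expandR]
    exact swap4 _
  rw [claim1, claim2]
  have cs : (∑ p, T p p) ^ 2 ≤ (∑ p, T p p ^ 2) * n := by
    have := Finset.sum_mul_sq_le_sq_mul_sq Finset.univ (fun p : Fin n => T p p) (fun _ => 1)
    simpa [Finset.card_univ] using this
  have diag_le : ∑ p, T p p ^ 2 ≤ ∑ p, ∑ q, T p q ^ 2 := by
    apply Finset.sum_le_sum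
    intro p _
    exact Finset.single_le_sum (f := fun q => T p q ^ 2) (fun q _ => sq_nonneg _)
      (Finset.mem_univ p)
  rw [div_le_iff₀ (by positivity)]
  calc (∑ p, T p p) ^ 2 ≤ (∑ p, T p p ^ 2) * n := cs
    _ ≤ (∑ p, ∑ q, T p q ^ 2) * n := mul_le_mul_of_nonneg_right diag_le (by positivity)

/-- For positive semidefinite `M, N`, the matrix with entries
`M_{jk}² + N_{jk}² − (M_{jj}M_{kk} + N_{jj}N_{kk})/n` is positive semidefinite. -/
theorem stmt2 (n : ℕ) (M N : Matrix (Fin n) (Fin n) ℝ)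
    (hM : M.PosSemidef) (hN : N.PosSemidef) :
    (Matrix.of fun j k =>
      M j k ^ 2 + N j k ^ 2 - (M j j * M k k + N j j * N k k) / (n : ℝ)).PosSemidef := by
  have hMsymm : ∀ j k, M k j = M j k := fun j k => by
    have := hM.1.apply j k; simpa using this
  have hNsymm : ∀ j k, N k j = N j k := fun j k => by
    have := hN.1.apply j k; simpa using this
  rw [Matrix.posSemidef_iff_dotProduct_mulVec]
  constructor
  · ext j k
    simp only [Matrix.conjTranspose_apply, Matrix.of_apply, star_trivial]
    rw [hMsymm j k, hNsymm j k]
    ring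
  · intro x
    have hqf : dotProduct (star x) ((Matrix.of fun j k =>
        M j k ^ 2 + N j k ^ 2 - (M j j * M k k + N j j * N k k) / (n : ℝ)).mulVec x)
        = (∑ j, ∑ k, x j * x k * M j k ^ 2 - (∑ j, x j * M j j) ^ 2 / n)
          + (∑ j, ∑ k, x j * x k * N j k ^ 2 - (∑ j, x j * N j j) ^ 2 / n) := by
      have eM : (∑ j, x j * M j j) ^ 2 / (n : ℝ)
          = ∑ j, ∑ k, (x j * M j j) * (x k * M k k) / n := by
        rw [sq, Finset.sum_mul_sum, Finset.sum_div]
        simp_rw [Finset.sum_div]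
      have eN : (∑ j, x j * N j j) ^ 2 / (n : ℝ)
          = ∑ j, ∑ k, (x j * N j j) * (x k * N k k) / n := by
        rw [sq, Finset.sum_mul_sum, Finset.sum_div]
        simp_rw [Finset.sum_div]
      rw [eM, eN]
      simp only [dotProduct, Matrix.mulVec, star_trivial, Matrix.of_apply]
      rw [← Finset.sum_sub_distrib, ← Finset.sum_sub_distrib, ← Finset.sum_add_distrib]
      refine Finset.sum_congr rfl fun j _ => ?_
      rw [← Finset.sum_sub_distrib, ← Finset.sum_sub_distrib, ← Finset.sum_add_distrib,
        Finset.mul_sum]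
      refine Finset.sum_congr rfl fun k _ => ?_
      ring
    rw [hqf]
    have h1 := key n M hM x
    have h2 := key n N hN x
    linarith
end

section
/- Let (λ̃_ℓ)_{ℓ≥0} ∈ ℓ¹ be a nonnegative nonincreasing sequence and let c > 1 satisfy h_{⌊k/2⌋}² ≤ c h_k² for all k. Define μ̃_ℓ = (2cA)^{−1/2} λ̃_{2ℓ} with A = Σ_ℓ λ̃_{2ℓ} > 0. Then the convolution square satisfies (μ̃ ∗ μ̃)_k ≤ λ̃_k for all k ≥ 1, and (μ̃ ∗ μ̃)_0 ≤ (2c)^{−1} λ̃_0, where (μ̃ ∗ ν̃)_k := Σ_{ℓ,s} C_k^{ℓ,s} μ̃_ℓ ν̃_s. -/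
/-- Abstract version of the convolution-square estimate: with `C k ℓ s` the (Gegenbauer)
linearization coefficients (nonnegative, supported on `|ℓ−s| ≤ k ≤ ℓ+s`, summing to `1` in `k`,
satisfying the symmetry `C_k^{ℓ,s} h_k² = C_s^{ℓ,k} h_s²`), `h` the decreasing positive squared
norms with `h_{⌊k/2⌋}² ≤ c h_k²`, and `μ̃_ℓ = (2cA)^{−1/2} λ̃_{2ℓ}`, `A = ∑_ℓ λ̃_{2ℓ}`, one has
`(μ̃∗μ̃)_k ≤ λ̃_k` for `k ≥ 1` and `(μ̃∗μ̃)_0 ≤ (2c)^{−1} λ̃_0`. -/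
theorem stmt11 (c : ℝ) (hc : 1 < c)
    (h : ℕ → ℝ) (hhpos : ∀ k, 0 < h k) (hhdec : ∀ k l, k ≤ l → h l ≤ h k)
    (hhalf : ∀ k : ℕ, h (k / 2) ≤ c * h k)
    (C : ℕ → ℕ → ℕ → ℝ)
    (hCnn : ∀ k l s, 0 ≤ C k l s)
    (hCzero : ∀ k l s, (k < max l s - min l s ∨ l + s < k) → C k l s = 0)
    (hCsum : ∀ l s, ∑ k ∈ Finset.Icc (max l s - min l s) (l + s), C k l s = 1)
    (hCsym : ∀ k l s, C k l s = C k s l)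
    (hCswap : ∀ k l s, C k l s * h k = C s l k * h s)
    (lam : ℕ → ℝ) (hlnn : ∀ k, 0 ≤ lam k) (hlmono : ∀ k l, k ≤ l → lam l ≤ lam k)
    (hlsum : Summable lam)
    (A : ℝ) (hA : A = ∑' l : ℕ, lam (2 * l)) (hApos : 0 < A)
    (mu : ℕ → ℝ) (hmu : ∀ l, mu l = (2 * c * A) ^ (-(1 : ℝ) / 2) * lam (2 * l)) :
    (∀ k : ℕ, 1 ≤ k → (∑' l : ℕ, ∑' s : ℕ, C k l s * mu l * mu s) ≤ lam k) ∧
      (∑' l : ℕ, ∑' s : ℕ, C 0 l s * mu l * mu s) ≤ (2 * c)⁻¹ * lam 0 := by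
  have hc0 : (0:ℝ) < c := lt_trans one_pos hc
  have h2cA : (0:ℝ) < 2 * c * A := by positivity
  have hr2 : (2*c*A) ^ (-(1:ℝ)/2) * (2*c*A) ^ (-(1:ℝ)/2) = (2*c*A)⁻¹ := by
    rw [← Real.rpow_add h2cA]
    norm_num [Real.rpow_neg_one]
  have hrpos : 0 < (2*c*A) ^ (-(1:ℝ)/2) := Real.rpow_pos_of_pos h2cA _
  have hmunn : ∀ l, 0 ≤ mu l := fun l => by
    rw [hmu]; exact mul_nonneg hrpos.le (hlnn _)
  have hlam2 : Summable (fun l => lam (2 * l)) :=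
    hlsum.comp_injective (fun a b hab => by omega)
  -- vanishing lemmas
  have hv1 : ∀ k l s : ℕ, l + k < s → C k l s = 0 := fun k l s hlt =>
    hCzero k l s (by omega)
  have hv2 : ∀ k l s : ℕ, s + k < l → C k l s = 0 := fun k l s hlt =>
    hCzero k l s (by omega)
  have hv3 : ∀ k l s : ℕ, l + s < k → C k l s = 0 := fun k l s hlt =>
    hCzero k l s (Or.inr hlt)
  -- bounded partial sums in the first index
  have hCle1 : ∀ (l k : ℕ) (T : Finset ℕ), ∑ s ∈ T, C s l k ≤ 1 := by
    intro l k T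
    calc ∑ s ∈ T, C s l k
        ≤ ∑ s ∈ T ∪ Finset.Icc (max l k - min l k) (l + k), C s l k :=
          Finset.sum_le_sum_of_subset_of_nonneg Finset.subset_union_left
            (fun i _ _ => hCnn i l k)
      _ = ∑ s ∈ Finset.Icc (max l k - min l k) (l + k), C s l k := by
          refine (Finset.sum_subset Finset.subset_union_right ?_).symm
          intro x _ hnx
          rw [Finset.mem_Icc] at hnx
          exact hCzero x l k (by omega)
      _ = 1 := hCsum l k
  -- main bound, valid for all k
  have main : ∀ k : ℕ, (∑' l : ℕ, ∑' s : ℕ, C k l s * mu l * mu s) ≤ lam k := by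
    intro k
    set K : ℝ := (2*c*A)⁻¹ * (c * lam k) with hK
    have hKnn : 0 ≤ K := by
      apply mul_nonneg (inv_nonneg.mpr h2cA.le) (mul_nonneg hc0.le (hlnn k))
    -- pointwise bound for ordered pairs
    have half : ∀ l s : ℕ, l ≤ s →
        C k l s * lam (2*l) * lam (2*s) ≤ c * lam k * (lam (2*l) * C s l k) := by
      intro l s hls
      by_cases hz : C k l s = 0
      · rw [hz, zero_mul, zero_mul]
        have := mul_nonneg (mul_nonneg hc0.le (hlnn k)) (mul_nonneg (hlnn (2*l)) (hCnn s l k))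
        linarith
      · have hsupp : max l s - min l s ≤ k ∧ k ≤ l + s := by
          by_contra hcon; exact hz (hCzero k l s (by omega))
        have hlamle : lam (2*s) ≤ lam k := hlmono k (2*s) (by omega)
        have hhs : h s ≤ c * h k := le_trans (hhdec (k/2) s (by omega)) (hhalf k)
        have hCb : C k l s ≤ c * C s l k := by
          have hsw := hCswap k l s
          have hkpos := hhpos k
          nlinarith [hCnn s l k, mul_le_mul_of_nonneg_left hhs (hCnn s l k)]
        calc C k l s * lam (2*l) * lam (2*s)
            ≤ (c * C s l k * lam (2*l)) * lam k := by
              apply mul_le_mul (mul_le_mul_of_nonneg_right hCb (hlnn _)) hlamle (hlnn _)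
              exact mul_nonneg (mul_nonneg hc0.le (hCnn s l k)) (hlnn _)
          _ = c * lam k * (lam (2*l) * C s l k) := by ring
    -- pointwise bound for all pairs
    have hFG : ∀ l s : ℕ, C k l s * mu l * mu s
        ≤ K * (lam (2*l) * C s l k + lam (2*s) * C l s k) := by
      intro l s
      have e : C k l s * mu l * mu s
          = (2*c*A)⁻¹ * (C k l s * lam (2*l) * lam (2*s)) := by
        rw [hmu l, hmu s, ← hr2]; ring
      have hbound : C k l s * lam (2*l) * lam (2*s)
          ≤ c * lam k * (lam (2*l) * C s l k + lam (2*s) * C l s k) := by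
        rcases le_total l s with hls | hsl
        · have h1 := half l s hls
          have h2 : 0 ≤ c * lam k * (lam (2*s) * C l s k) :=
            mul_nonneg (mul_nonneg hc0.le (hlnn k)) (mul_nonneg (hlnn _) (hCnn l s k))
          nlinarith
        · have h1 := half s l hsl
          rw [hCsym k l s]
          have h2 : 0 ≤ c * lam k * (lam (2*l) * C s l k) :=
            mul_nonneg (mul_nonneg hc0.le (hlnn k)) (mul_nonneg (hlnn _) (hCnn s l k))
          nlinarith
      rw [e, hK]
      have hinv : (0:ℝ) ≤ (2*c*A)⁻¹ := by positivity
      nlinarith [mul_le_mul_of_nonneg_left hbound hinv]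
    -- inner sums are finite
    have hFin : ∀ l : ℕ, (∑' s : ℕ, C k l s * mu l * mu s)
        = ∑ s ∈ Finset.range (l + k + 1), C k l s * mu l * mu s := by
      intro l
      apply tsum_eq_sum
      intro s hs
      rw [Finset.mem_range] at hs
      rw [hv1 k l s (by omega), zero_mul, zero_mul]
    -- the swapped-index family
    have hf2zero : ∀ l s : ℕ, l + k < s → lam (2*s) * C l s k = 0 := by
      intro l s hlt
      rw [hCzero l s k (by omega), mul_zero]
    have hf2inner : ∀ s : ℕ, Summable (fun l => lam (2*s) * C l s k) := by
      intro s
      apply summable_of_ne_finset_zero (s := Finset.range (s + k + 1))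
      intro l hl
      rw [Finset.mem_range] at hl
      rw [hv3 l s k (by omega), mul_zero]
    have hf2innersum : ∀ s : ℕ, (∑' l : ℕ, lam (2*s) * C l s k) ≤ lam (2*s) := by
      intro s
      rw [tsum_eq_sum (s := Finset.range (s + k + 1)) (by
        intro l hl
        rw [Finset.mem_range] at hl
        rw [hv3 l s k (by omega), mul_zero]), ← Finset.mul_sum]
      calc lam (2*s) * ∑ l ∈ Finset.range (s+k+1), C l s k
          ≤ lam (2*s) * 1 := mul_le_mul_of_nonneg_left (hCle1 s k _) (hlnn _)
        _ = lam (2*s) := mul_one _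
    have hf2nn : ∀ s l : ℕ, 0 ≤ lam (2*s) * C l s k :=
      fun s l => mul_nonneg (hlnn _) (hCnn l s k)
    have hP : Summable (Function.uncurry (fun s l => lam (2*s) * C l s k)) := by
      apply (summable_prod_of_nonneg (fun p => hf2nn p.1 p.2)).mpr
      exact ⟨hf2inner, Summable.of_nonneg_of_le
        (fun s => tsum_nonneg (fun l => hf2nn s l)) hf2innersum hlam2⟩
    have hD : Summable (fun l => ∑' s : ℕ, lam (2*s) * C l s k) := hP.prod_symm.prod
    have hDnn : ∀ l, 0 ≤ ∑' s : ℕ, lam (2*s) * C l s k :=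
      fun l => tsum_nonneg (fun s => hf2nn s l)
    -- bound for the finite inner sum of G terms
    have hGsum : ∀ l : ℕ, (∑ s ∈ Finset.range (l + k + 1),
        K * (lam (2*l) * C s l k + lam (2*s) * C l s k))
        ≤ K * (lam (2*l) + ∑' s : ℕ, lam (2*s) * C l s k) := by
      intro l
      have e1 : (∑ s ∈ Finset.range (l + k + 1),
          K * (lam (2*l) * C s l k + lam (2*s) * C l s k))
          = K * (lam (2*l) * (∑ s ∈ Finset.range (l+k+1), C s l k)
              + ∑ s ∈ Finset.range (l+k+1), lam (2*s) * C l s k) := by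
        rw [← Finset.mul_sum, Finset.sum_add_distrib, ← Finset.mul_sum]
      rw [e1]
      apply mul_le_mul_of_nonneg_left _ hKnn
      have e2 : (∑ s ∈ Finset.range (l+k+1), lam (2*s) * C l s k)
          = ∑' s : ℕ, lam (2*s) * C l s k := by
        refine (tsum_eq_sum ?_).symm
        intro s hs
        rw [Finset.mem_range] at hs
        exact hf2zero l s (by omega)
      rw [e2]
      have : lam (2*l) * (∑ s ∈ Finset.range (l+k+1), C s l k) ≤ lam (2*l) * 1 :=
        mul_le_mul_of_nonneg_left (hCle1 l k _) (hlnn _)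
      linarith
    set B : ℕ → ℝ := fun l => K * (lam (2*l) + ∑' s : ℕ, lam (2*s) * C l s k) with hB
    have hBsum : Summable B := (hlam2.add hD).mul_left K
    have hFB : ∀ l : ℕ, (∑' s : ℕ, C k l s * mu l * mu s) ≤ B l := by
      intro l
      rw [hFin l]
      calc (∑ s ∈ Finset.range (l + k + 1), C k l s * mu l * mu s)
          ≤ ∑ s ∈ Finset.range (l + k + 1),
              K * (lam (2*l) * C s l k + lam (2*s) * C l s k) :=
            Finset.sum_le_sum (fun s _ => hFG l s)
        _ ≤ B l := hGsum l
    have hFnn : ∀ l : ℕ, 0 ≤ ∑' s : ℕ, C k l s * mu l * mu s :=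
      fun l => tsum_nonneg (fun s =>
        mul_nonneg (mul_nonneg (hCnn k l s) (hmunn l)) (hmunn s))
    have hFsum : Summable (fun l => ∑' s : ℕ, C k l s * mu l * mu s) :=
      Summable.of_nonneg_of_le hFnn hFB hBsum
    calc (∑' l : ℕ, ∑' s : ℕ, C k l s * mu l * mu s)
        ≤ ∑' l : ℕ, B l := Summable.tsum_le_tsum hFB hFsum hBsum
      _ = K * ((∑' l : ℕ, lam (2*l)) + ∑' l : ℕ, ∑' s : ℕ, lam (2*s) * C l s k) := by
          rw [hB, tsum_mul_left, Summable.tsum_add hlam2 hD]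
      _ ≤ K * (A + A) := by
          apply mul_le_mul_of_nonneg_left _ hKnn
          have hswap : (∑' l : ℕ, ∑' s : ℕ, lam (2*s) * C l s k)
              = ∑' s : ℕ, ∑' l : ℕ, lam (2*s) * C l s k := Summable.tsum_comm hP
          have hle : (∑' s : ℕ, ∑' l : ℕ, lam (2*s) * C l s k) ≤ ∑' s : ℕ, lam (2*s) := by
            exact Summable.tsum_le_tsum hf2innersum hP.prod hlam2
          rw [hswap, hA]
          have : (∑' (l : ℕ), lam (2 * l)) = ∑' (s : ℕ), lam (2 * s) := rfl
          linarith [hle]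
      _ = lam k := by
          rw [hK]
          field_simp
          ring
  refine ⟨fun k _ => main k, ?_⟩
  -- k = 0 case
  have hdiag : ∀ l : ℕ, (∑' s : ℕ, C 0 l s * mu l * mu s) = C 0 l l * mu l * mu l := by
    intro l
    rw [tsum_eq_sum (s := {l}) (by
      intro s hs
      rw [Finset.mem_singleton] at hs
      rw [hCzero 0 l s (by omega), zero_mul, zero_mul])]
    rw [Finset.sum_singleton]
  have hC0ll : ∀ l : ℕ, C 0 l l ≤ 1 := by
    intro l
    have hCll0 : C l l 0 = 1 := by
      have := hCsum l 0
      simpa using this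
    have hsw := hCswap 0 l l
    rw [hCll0, one_mul] at hsw
    have h1 := hhdec 0 l (Nat.zero_le l)
    have h2 := hhpos 0
    nlinarith
  have hbound : ∀ l : ℕ, C 0 l l * mu l * mu l ≤ (2*c*A)⁻¹ * (lam 0 * lam (2*l)) := by
    intro l
    have e : C 0 l l * mu l * mu l
        = (2*c*A)⁻¹ * (C 0 l l * lam (2*l) * lam (2*l)) := by
      rw [hmu l, ← hr2]; ring
    rw [e]
    apply mul_le_mul_of_nonneg_left _ (by positivity)
    have h1 : lam (2*l) ≤ lam 0 := hlmono 0 (2*l) (Nat.zero_le _)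
    have h2 := hlnn (2*l)
    have h3 := hCnn 0 l l
    nlinarith [mul_le_mul_of_nonneg_right (hC0ll l) (mul_nonneg h2 h2),
      mul_le_mul_of_nonneg_right h1 h2]
  have hRHSsum : Summable (fun l => (2*c*A)⁻¹ * (lam 0 * lam (2*l))) := by
    exact ((hlam2.mul_left (lam 0)).mul_left _)
  have hLnn : ∀ l : ℕ, 0 ≤ C 0 l l * mu l * mu l :=
    fun l => mul_nonneg (mul_nonneg (hCnn 0 l l) (hmunn l)) (hmunn l)
  have hLsum : Summable (fun l => C 0 l l * mu l * mu l) :=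
    Summable.of_nonneg_of_le hLnn hbound hRHSsum
  calc (∑' l : ℕ, ∑' s : ℕ, C 0 l s * mu l * mu s)
      = ∑' l : ℕ, C 0 l l * mu l * mu l := tsum_congr hdiag
    _ ≤ ∑' l : ℕ, (2*c*A)⁻¹ * (lam 0 * lam (2*l)) := Summable.tsum_le_tsum hbound hLsum hRHSsum
    _ = (2*c*A)⁻¹ * (lam 0 * A) := by rw [tsum_mul_left, tsum_mul_left, hA]
    _ = (2*c)⁻¹ * lam 0 := by field_simp
end

section
/- Let H be a reproducing kernel Hilbert space of real functions on the sphere S^d with continuous kernel K, and let INT(f) = ⟨f, h₀⟩_H for some h₀ ∈ H. Suppose α > 0 is such that for every n points x₁,…,x_n ∈ S^d the matrix (K(x_j,x_k) − α h₀(x_j)h₀(x_k))_{j,k} is positive semidefinite. Then the n-th optimal quadrature error satisfies e_n(H)² ≥ ‖h₀‖_H² − α^{−1}, where e_n(H) = inf over weights c ∈ ℝⁿ and nodes x₁,…,x_n of sup_{‖f‖_H ≤ 1} |INT(f) − Σ_j c_j f(x_j)|. -/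
open RealInnerProductSpace

/-- If `H` is a RKHS on `S^d` (realized via the feature map `Kfun`, so that
`f(x) = ⟪f, Kfun x⟫`), `INT = ⟪·, h₀⟫`, `α > 0`, and for all `n`-point configurations the
matrix `(K(x_j,x_k) − α h₀(x_j) h₀(x_k))` is positive semidefinite, then the optimal
`n`-point quadrature error satisfies `e_n(H)² ≥ ‖h₀‖² − α⁻¹`. -/
theorem stmt12 (d : ℕ) (hd : 2 ≤ d)
    {H : Type*} [NormedAddCommGroup H] [InnerProductSpace ℝ H] [CompleteSpace H]
    (Kfun : Metric.sphere (0 : EuclideanSpace ℝ (Fin (d + 1))) 1 → H)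
    (hKcont : Continuous fun p :
        Metric.sphere (0 : EuclideanSpace ℝ (Fin (d + 1))) 1 ×
          Metric.sphere (0 : EuclideanSpace ℝ (Fin (d + 1))) 1 => ⟪Kfun p.1, Kfun p.2⟫)
    (h₀ : H) (α : ℝ) (hα : 0 < α) (n : ℕ)
    (hpsd : ∀ x : Fin n → Metric.sphere (0 : EuclideanSpace ℝ (Fin (d + 1))) 1,
      (Matrix.of fun j k =>
        ⟪Kfun (x j), Kfun (x k)⟫ - α * (⟪h₀, Kfun (x j)⟫ * ⟪h₀, Kfun (x k)⟫)).PosSemidef) :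
    ‖h₀‖ ^ 2 - α⁻¹ ≤
      (⨅ (c : Fin n → ℝ)
          (x : Fin n → Metric.sphere (0 : EuclideanSpace ℝ (Fin (d + 1))) 1),
        ⨆ f : {f : H // ‖f‖ ≤ 1},
          |⟪(f : H), h₀⟫ - ∑ j, c j * ⟪(f : H), Kfun (x j)⟫|) ^ 2 := by
  haveI : Nonempty (Metric.sphere (0 : EuclideanSpace ℝ (Fin (d + 1))) 1) :=
    ((NormedSpace.sphere_nonempty (x := (0 : EuclideanSpace ℝ (Fin (d + 1)))) (r := 1)).mpr
      zero_le_one).to_subtype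
  set b : ℝ := ‖h₀‖ ^ 2 - α⁻¹ with hb
  have key : ∀ (c : Fin n → ℝ) (x : Fin n → Metric.sphere (0 : EuclideanSpace ℝ (Fin (d + 1))) 1),
      Real.sqrt b ≤ ⨆ f : {f : H // ‖f‖ ≤ 1},
          |⟪(f : H), h₀⟫ - ∑ j, c j * ⟪(f : H), Kfun (x j)⟫| := by
    intro c x
    set w : H := h₀ - ∑ j, c j • Kfun (x j) with hw
    have hrw : ∀ f : H, ⟪f, h₀⟫ - ∑ j, c j * ⟪f, Kfun (x j)⟫ = ⟪f, w⟫ := by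
      intro f
      simp [hw, inner_sub_right, inner_sum, inner_smul_right, mul_comm]
    have hq := (hpsd x).dotProduct_mulVec_nonneg c
    have hsum : (0:ℝ) ≤ ∑ j, ∑ k, c j * c k *
        (⟪Kfun (x j), Kfun (x k)⟫ - α * (⟪h₀, Kfun (x j)⟫ * ⟪h₀, Kfun (x k)⟫)) := by
      simpa [dotProduct, Matrix.mulVec, Finset.mul_sum, mul_comm, mul_left_comm,
        mul_assoc] using hq
    set g : H := ∑ j, c j • Kfun (x j) with hg
    have hgg : ⟪g, g⟫ = ∑ j, ∑ k, c j * c k * ⟪Kfun (x j), Kfun (x k)⟫ := by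
      simp only [hg, inner_sum, sum_inner, inner_smul_left, inner_smul_right,
        RCLike.star_def, starRingEnd_apply, star_trivial]
      rw [Finset.sum_comm]
      refine Finset.sum_congr rfl fun j _ => ?_
      rw [Finset.mul_sum]
      exact Finset.sum_congr rfl fun k _ => by ring
    have hhg : ⟪h₀, g⟫ = ∑ j, c j * ⟪h₀, Kfun (x j)⟫ := by
      simp [hg, inner_sum, inner_smul_right]
    have hquad : α * ⟪h₀, g⟫ ^ 2 ≤ ⟪g, g⟫ := by
      have hsq : (∑ j, c j * ⟪h₀, Kfun (x j)⟫) ^ 2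
          = ∑ j, ∑ k, c j * c k * (⟪h₀, Kfun (x j)⟫ * ⟪h₀, Kfun (x k)⟫) := by
        rw [sq, Finset.sum_mul_sum]
        exact Finset.sum_congr rfl fun j _ => Finset.sum_congr rfl fun k _ => by ring
      have hexp : ∑ j, ∑ k, c j * c k *
            (⟪Kfun (x j), Kfun (x k)⟫ - α * (⟪h₀, Kfun (x j)⟫ * ⟪h₀, Kfun (x k)⟫))
          = (∑ j, ∑ k, c j * c k * ⟪Kfun (x j), Kfun (x k)⟫)
            - α * ∑ j, ∑ k, c j * c k * (⟪h₀, Kfun (x j)⟫ * ⟪h₀, Kfun (x k)⟫) := by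
        rw [Finset.mul_sum, ← Finset.sum_sub_distrib]
        refine Finset.sum_congr rfl fun j _ => ?_
        rw [Finset.mul_sum, ← Finset.sum_sub_distrib]
        exact Finset.sum_congr rfl fun k _ => by ring
      rw [hhg, hgg, hsq]
      rw [hexp] at hsum
      linarith
    have hnorm : b ≤ ‖w‖ ^ 2 := by
      have hexp : ‖w‖ ^ 2 = ‖h₀‖ ^ 2 - 2 * ⟪h₀, g⟫ + ⟪g, g⟫ := by
        rw [hw, @norm_sub_sq_real, ← real_inner_self_eq_norm_sq g]
      rw [hexp, hb]
      nlinarith [hquad, sq_nonneg (α * ⟪h₀, g⟫ - 1), hα, mul_inv_cancel₀ hα.ne',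
        mul_pos hα hα]
    have hsw : Real.sqrt b ≤ ‖w‖ := by
      calc Real.sqrt b ≤ Real.sqrt (‖w‖ ^ 2) := Real.sqrt_le_sqrt hnorm
        _ = ‖w‖ := Real.sqrt_sq (norm_nonneg w)
    have hbdd : BddAbove (Set.range fun f : {f : H // ‖f‖ ≤ 1} =>
        |⟪(f : H), h₀⟫ - ∑ j, c j * ⟪(f : H), Kfun (x j)⟫|) := by
      refine ⟨‖w‖, ?_⟩
      rintro y ⟨f, rfl⟩
      show |⟪(f : H), h₀⟫ - ∑ j, c j * ⟪(f : H), Kfun (x j)⟫| ≤ ‖w‖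
      rw [hrw]
      calc |⟪(f : H), w⟫| ≤ ‖(f : H)‖ * ‖w‖ := abs_real_inner_le_norm _ _
        _ ≤ 1 * ‖w‖ := mul_le_mul_of_nonneg_right f.2 (norm_nonneg w)
        _ = ‖w‖ := one_mul _
    refine hsw.trans ?_
    by_cases hw0 : w = 0
    · have h0 : (0:ℝ) ≤ ⨆ f : {f : H // ‖f‖ ≤ 1},
          |⟪(f : H), h₀⟫ - ∑ j, c j * ⟪(f : H), Kfun (x j)⟫| := by
        have h0 := le_ciSup hbdd (⟨0, by simp⟩ : {f : H // ‖f‖ ≤ 1})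
        simpa using h0
      rw [hw0, norm_zero]; exact h0
    · have hwn : (0:ℝ) < ‖w‖ := norm_pos_iff.mpr hw0
      have h0 := le_ciSup hbdd (⟨‖w‖⁻¹ • w, by
        rw [norm_smul]
        simp [abs_of_nonneg (inv_nonneg.mpr hwn.le), inv_mul_cancel₀ hwn.ne']⟩ :
        {f : H // ‖f‖ ≤ 1})
      refine le_trans ?_ h0
      show ‖w‖ ≤ |⟪‖w‖⁻¹ • w, h₀⟫ - ∑ j, c j * ⟪‖w‖⁻¹ • w, Kfun (x j)⟫|
      rw [hrw]
      rw [real_inner_smul_left, real_inner_self_eq_norm_sq w,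
        abs_of_nonneg (by positivity), sq]
      field_simp
      rfl
  have hinf_nonneg : 0 ≤ ⨅ (c : Fin n → ℝ)
      (x : Fin n → Metric.sphere (0 : EuclideanSpace ℝ (Fin (d + 1))) 1),
      ⨆ f : {f : H // ‖f‖ ≤ 1},
        |⟪(f : H), h₀⟫ - ∑ j, c j * ⟪(f : H), Kfun (x j)⟫| := by
    refine le_ciInf fun c => le_ciInf fun x => ?_
    exact (Real.sqrt_nonneg b).trans (key c x)
  have hinf_sqrt : Real.sqrt b ≤ ⨅ (c : Fin n → ℝ)
      (x : Fin n → Metric.sphere (0 : EuclideanSpace ℝ (Fin (d + 1))) 1),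
      ⨆ f : {f : H // ‖f‖ ≤ 1},
        |⟪(f : H), h₀⟫ - ∑ j, c j * ⟪(f : H), Kfun (x j)⟫| :=
    le_ciInf fun c => le_ciInf fun x => key c x
  by_cases hb0 : 0 ≤ b
  · calc b = Real.sqrt b ^ 2 := (Real.sq_sqrt hb0).symm
      _ ≤ _ := pow_le_pow_left₀ (Real.sqrt_nonneg b) hinf_sqrt 2
  · push_neg at hb0
    calc b ≤ 0 := hb0.le
      _ ≤ _ := by positivity
end

section
/- Let α > 0, β ∈ ℝ, d ≥ 2, and let A_We := a priori sequence a_n = λ_{ℓ,d} for C(d,ℓ−1) < n ≤ C(d,ℓ), where (λ_{ℓ,d}) is nonnegative nonincreasing with lim_{ℓ→∞} λ_{ℓ,d} ℓ^α (ln ℓ)^β = 1 and C(d,ℓ) = (2ℓ+d)(ℓ+d−1)!/(ℓ! d!) (with C(d,−1)=0). Then lim_{n→∞} n^{α/d} (ln n)^β a_n = (2/d!)^{α/d} d^β. -/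
/-- `C(d,m) = (2m+d)(m+d−1)!/(m! d!)` (a natural number; the division is exact). -/
def CdN (d m : ℕ) : ℕ :=
  (2 * m + d) * Nat.factorial (m + d - 1) / (Nat.factorial m * Nat.factorial d)

open Filter Finset

lemma CdN_zero (d : ℕ) (hd : 1 ≤ d) : CdN d 0 = 1 := by
  rcases d with _ | k
  · omega
  · show (0 + (k + 1)) * Nat.factorial (0 + (k + 1) - 1) / (1 * Nat.factorial (k + 1)) = 1
    simp [Nat.factorial_succ, Nat.mul_comm, Nat.div_self, Nat.factorial_pos]

lemma key_prod (d k : ℕ) :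
    (Nat.choose (k + 1 + d) d + Nat.choose (k + d) d) *
      (Nat.factorial (k + 1) * Nat.factorial d) = (2 * (k + 1) + d) * Nat.factorial (k + d) := by
  have h1 : Nat.choose (k + 1 + d) d * Nat.factorial d * Nat.factorial (k + 1) =
      Nat.factorial (k + 1 + d) := by
    have := Nat.choose_mul_factorial_mul_factorial (Nat.le_add_left d (k + 1))
    simpa [Nat.add_sub_cancel] using this
  have h2 : Nat.choose (k + d) d * Nat.factorial d * Nat.factorial k =
      Nat.factorial (k + d) := by
    have := Nat.choose_mul_factorial_mul_factorial (Nat.le_add_left d k)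
    simpa [Nat.add_sub_cancel] using this
  have hf : Nat.factorial (k + 1 + d) = (k + 1 + d) * Nat.factorial (k + d) := by
    rw [show k + 1 + d = (k + d) + 1 by omega, Nat.factorial_succ]
  have hfk : Nat.factorial (k + 1) = (k + 1) * Nat.factorial k := Nat.factorial_succ k
  have hA : Nat.choose (k + 1 + d) d * (Nat.factorial (k + 1) * Nat.factorial d) =
      (k + 1 + d) * Nat.factorial (k + d) := by
    rw [mul_comm (Nat.factorial (k + 1)), ← mul_assoc, h1, hf]
  have hB : Nat.choose (k + d) d * (Nat.factorial (k + 1) * Nat.factorial d) =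
      (k + 1) * Nat.factorial (k + d) := by
    calc Nat.choose (k + d) d * (Nat.factorial (k + 1) * Nat.factorial d)
        = (k + 1) * (Nat.choose (k + d) d * Nat.factorial d * Nat.factorial k) := by
          rw [hfk]; ring
      _ = (k + 1) * Nat.factorial (k + d) := by rw [h2]
  rw [add_mul, hA, hB]; ring

lemma CdN_succ (d k : ℕ) (hd : 1 ≤ d) :
    CdN d (k + 1) = Nat.choose (k + 1 + d) d + Nat.choose (k + d) d := by
  apply Nat.div_eq_of_eq_mul_left
  · positivity
  rw [show k + 1 + d - 1 = k + d by omega, key_prod]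

lemma CdN_mul (d m : ℕ) (hd : 1 ≤ d) :
    CdN d m * (Nat.factorial m * Nat.factorial d) = (2 * m + d) * Nat.factorial (m + d - 1) := by
  rcases m with _ | k
  · rw [CdN_zero d hd]
    rcases d with _ | e
    · omega
    · show 1 * (1 * Nat.factorial (e + 1)) = (2 * 0 + (e + 1)) * Nat.factorial (0 + (e + 1) - 1)
      simp [Nat.factorial_succ, Nat.mul_comm]
  · rw [CdN_succ d k hd, show k + 1 + d - 1 = k + d by omega, key_prod]

lemma factorial_add_prod (m s : ℕ) :
    Nat.factorial (m + s) = Nat.factorial m * ∏ i ∈ range s, (m + 1 + i) := by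
  induction s with
  | zero => simp
  | succ s ih =>
    rw [show m + (s + 1) = (m + s) + 1 by omega, Nat.factorial_succ, ih,
      Finset.prod_range_succ]
    ring

lemma CdN_mul_fact (d m : ℕ) (hd : 1 ≤ d) :
    CdN d m * Nat.factorial d = (2 * m + d) * ∏ i ∈ range (d - 1), (m + 1 + i) := by
  have h := CdN_mul d m hd
  rw [show m + d - 1 = m + (d - 1) by omega, factorial_add_prod] at h
  apply Nat.eq_of_mul_eq_mul_left (Nat.factorial_pos m)
  calc Nat.factorial m * (CdN d m * Nat.factorial d)
      = CdN d m * (Nat.factorial m * Nat.factorial d) := by ring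
    _ = (2 * m + d) * (Nat.factorial m * ∏ i ∈ range (d - 1), (m + 1 + i)) := h
    _ = Nat.factorial m * ((2 * m + d) * ∏ i ∈ range (d - 1), (m + 1 + i)) := by ring

lemma CdN_strictMono (d : ℕ) (hd : 1 ≤ d) : StrictMono (CdN d) := by
  apply strictMono_nat_of_lt_succ
  intro m
  rcases m with _ | k
  · rw [CdN_zero d hd, CdN_succ d 0 hd]
    have : 1 ≤ Nat.choose (0 + 1 + d) d := Nat.choose_pos (by omega)
    have : 1 ≤ Nat.choose (0 + d) d := Nat.choose_pos (by omega)
    omega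
  · rw [CdN_succ d k hd, CdN_succ d (k + 1) hd]
    have h1 : Nat.choose (k + 1 + d) d ≤ Nat.choose (k + 1 + 1 + d) d :=
      Nat.choose_le_choose d (by omega)
    have h2 : Nat.choose (k + d) d < Nat.choose (k + 1 + d) d := by
      obtain ⟨e, rfl⟩ : ∃ e, d = e + 1 := ⟨d - 1, by omega⟩
      have hp : Nat.choose ((k + (e + 1)) + 1) (e + 1) =
          Nat.choose (k + (e + 1)) e + Nat.choose (k + (e + 1)) (e + 1) :=
        Nat.choose_succ_succ _ _
      have hpos : 0 < Nat.choose (k + (e + 1)) e := Nat.choose_pos (by omega)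
      have : k + 1 + (e + 1) = (k + (e + 1)) + 1 := by omega
      rw [this, hp]
      omega
    omega

lemma div_nat_tendsto (c : ℝ) : Tendsto (fun ℓ : ℕ => c / (ℓ : ℝ)) atTop (nhds 0) := by
  simpa [div_eq_mul_inv, one_div] using
    (tendsto_const_nhds (x := c)).mul tendsto_one_div_atTop_nhds_zero_nat

lemma aux1 (c : ℝ) : Tendsto (fun ℓ : ℕ => ((ℓ : ℝ) + c) / (ℓ : ℝ)) atTop (nhds 1) := by
  have h : Tendsto (fun ℓ : ℕ => 1 + c / (ℓ : ℝ)) atTop (nhds 1) := by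
    simpa using tendsto_const_nhds.add (div_nat_tendsto c)
  apply h.congr'
  filter_upwards [eventually_ge_atTop 1] with ℓ hℓ
  have h0 : (ℓ : ℝ) ≠ 0 := by
    simpa using Nat.one_le_iff_ne_zero.mp hℓ
  field_simp

lemma aux2 (c : ℝ) : Tendsto (fun ℓ : ℕ => (2 * (ℓ : ℝ) + c) / (ℓ : ℝ)) atTop (nhds 2) := by
  have h : Tendsto (fun ℓ : ℕ => 2 + c / (ℓ : ℝ)) atTop (nhds 2) := by
    simpa using tendsto_const_nhds.add (div_nat_tendsto c)
  apply h.congr'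
  filter_upwards [eventually_ge_atTop 1] with ℓ hℓ
  have h0 : (ℓ : ℝ) ≠ 0 := by
    simpa using Nat.one_le_iff_ne_zero.mp hℓ
  field_simp

lemma CdN_ratio (d : ℕ) (hd : 1 ≤ d) :
    Tendsto (fun ℓ : ℕ => (CdN d ℓ : ℝ) / (ℓ : ℝ) ^ d) atTop
      (nhds (2 / (Nat.factorial d : ℝ))) := by
  have hfac : (0 : ℝ) < (Nat.factorial d : ℝ) := by
    exact_mod_cast Nat.factorial_pos d
  have hprod : Tendsto (fun ℓ : ℕ => ∏ i ∈ range (d - 1), ((ℓ : ℝ) + (1 + (i : ℝ))) / (ℓ : ℝ))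
      atTop (nhds 1) := by
    have := tendsto_finset_prod (f := fun (i : ℕ) (ℓ : ℕ) => ((ℓ : ℝ) + (1 + (i : ℝ))) / (ℓ : ℝ))
      (a := fun _ => (1 : ℝ)) (x := atTop) (range (d - 1)) (fun i _ => aux1 (1 + (i : ℝ)))
    simpa using this
  have hmain : Tendsto
      (fun ℓ : ℕ => (2 * (ℓ : ℝ) + (d : ℝ)) / (ℓ : ℝ) *
        (∏ i ∈ range (d - 1), ((ℓ : ℝ) + (1 + (i : ℝ))) / (ℓ : ℝ)) / (Nat.factorial d : ℝ))
      atTop (nhds (2 / (Nat.factorial d : ℝ))) := by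
    have := ((aux2 (d : ℝ)).mul hprod).div_const (Nat.factorial d : ℝ)
    simpa using this
  apply hmain.congr'
  filter_upwards [eventually_ge_atTop 1] with ℓ hℓ
  have h0 : (ℓ : ℝ) ≠ 0 := by simpa using Nat.one_le_iff_ne_zero.mp hℓ
  have hcast : (CdN d ℓ : ℝ) * (Nat.factorial d : ℝ) =
      (2 * (ℓ : ℝ) + (d : ℝ)) * ∏ i ∈ range (d - 1), ((ℓ : ℝ) + (1 + (i : ℝ))) := by
    have h2 := congrArg (fun n : ℕ => (n : ℝ)) (CdN_mul_fact d ℓ hd)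
    push_cast at h2
    rw [h2]
    congr 1
    apply Finset.prod_congr rfl
    intro i _
    ring
  have hpowd : (ℓ : ℝ) ^ d = (ℓ : ℝ) * (ℓ : ℝ) ^ (d - 1) := by
    conv_lhs => rw [show d = (d - 1) + 1 by omega]
    rw [pow_succ']
  have hprodsplit : ∏ i ∈ range (d - 1), ((ℓ : ℝ) + (1 + (i : ℝ))) / (ℓ : ℝ) =
      (∏ i ∈ range (d - 1), ((ℓ : ℝ) + (1 + (i : ℝ)))) / (ℓ : ℝ) ^ (d - 1) := by
    rw [Finset.prod_div_distrib, Finset.prod_const, Finset.card_range]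
  have hC : (CdN d ℓ : ℝ) =
      (2 * (ℓ : ℝ) + (d : ℝ)) * (∏ i ∈ range (d - 1), ((ℓ : ℝ) + (1 + (i : ℝ)))) /
        (Nat.factorial d : ℝ) := by
    rw [eq_div_iff hfac.ne']; exact hcast
  rw [hprodsplit, hC, hpowd]
  field_simp

lemma CdN_ratio_pred (d : ℕ) (hd : 1 ≤ d) :
    Tendsto (fun ℓ : ℕ => (CdN d (ℓ - 1) : ℝ) / (ℓ : ℝ) ^ d) atTop
      (nhds (2 / (Nat.factorial d : ℝ))) := by
  have h1 : Tendsto (fun ℓ : ℕ => (CdN d (ℓ - 1) : ℝ) / ((ℓ - 1 : ℕ) : ℝ) ^ d) atTop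
      (nhds (2 / (Nat.factorial d : ℝ))) := (CdN_ratio d hd).comp (tendsto_sub_atTop_nat 1)
  have hbase : Tendsto (fun ℓ : ℕ => ((ℓ - 1 : ℕ) : ℝ) / (ℓ : ℝ)) atTop (nhds 1) := by
    apply (aux1 (-1)).congr'
    filter_upwards [eventually_ge_atTop 1] with ℓ hℓ
    rw [Nat.cast_sub hℓ]
    ring_nf
  have h2 : Tendsto (fun ℓ : ℕ => (((ℓ - 1 : ℕ) : ℝ) / (ℓ : ℝ)) ^ d) atTop (nhds 1) := by
    simpa using hbase.pow d
  have hm := h1.mul h2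
  rw [mul_one] at hm
  apply hm.congr'
  filter_upwards [eventually_ge_atTop 2] with ℓ hℓ
  have h2ℓ : (2 : ℝ) ≤ (ℓ : ℝ) := by exact_mod_cast hℓ
  have hx : (0 : ℝ) < (ℓ : ℝ) - 1 := by linarith
  have hy : (0 : ℝ) < (ℓ : ℝ) := by linarith
  rw [Nat.cast_sub (by omega : 1 ≤ ℓ), Nat.cast_one]
  rw [div_pow, div_mul_div_comm]
  have hx' : ((ℓ : ℝ) - 1) ^ d ≠ 0 := by positivity
  have hy' : (ℓ : ℝ) ^ d ≠ 0 := by positivity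
  field_simp


/-- If `(λ_{ℓ,d})` is nonnegative nonincreasing with `λ_{ℓ,d} ℓ^α (ln ℓ)^β → 1` and
`a_n = λ_{ℓ,d}` for `C(d,ℓ−1) < n ≤ C(d,ℓ)` (with `C(d,−1) = 0`), then
`n^{α/d} (ln n)^β a_n → (2/d!)^{α/d} d^β`. -/
theorem stmt18 (d : ℕ) (hd : 2 ≤ d) (α β : ℝ) (hα : 0 < α)
    (lam : ℕ → ℝ) (hnn : ∀ ℓ, 0 ≤ lam ℓ) (hmono : ∀ k l, k ≤ l → lam l ≤ lam k)
    (hlim : Filter.Tendsto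
      (fun ℓ : ℕ => lam ℓ * (ℓ : ℝ) ^ α * Real.log (ℓ : ℝ) ^ β) Filter.atTop (nhds 1))
    (a : ℕ → ℝ)
    (ha : ∀ ℓ n : ℕ, (if ℓ = 0 then 0 else CdN d (ℓ - 1)) < n → n ≤ CdN d ℓ → a n = lam ℓ) :
    Filter.Tendsto
      (fun n : ℕ => (n : ℝ) ^ (α / d) * Real.log (n : ℝ) ^ β * a n) Filter.atTop
      (nhds ((2 / (Nat.factorial d : ℝ)) ^ (α / (d : ℝ)) * (d : ℝ) ^ β)) := by
  have hd1 : 1 ≤ d := by omega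
  have hfac : (0 : ℝ) < (Nat.factorial d : ℝ) := by exact_mod_cast Nat.factorial_pos d
  have hc : (0 : ℝ) < 2 / (Nat.factorial d : ℝ) := by positivity
  have hmonoC : Monotone (CdN d) := (CdN_strictMono d hd1).monotone
  have hex : ∀ n : ℕ, ∃ ℓ, n ≤ CdN d ℓ := fun n =>
    ⟨n, le_trans (Nat.le_of_lt_succ (Nat.lt_succ_of_le le_rfl)) ((CdN_strictMono d hd1).le_apply)⟩
  set L : ℕ → ℕ := fun n => Nat.find (hex n) with hL
  have hub : ∀ n, n ≤ CdN d (L n) := fun n => Nat.find_spec (hex n)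
  have hlb : ∀ n ℓ, ℓ < L n → CdN d ℓ < n := by
    intro n ℓ h
    have := Nat.find_min (hex n) h
    omega
  -- L tends to infinity
  have hLtop : Tendsto L atTop atTop := by
    rw [tendsto_atTop_atTop]
    intro b
    refine ⟨CdN d b + 1, fun n hn => ?_⟩
    by_contra hcon
    push_neg at hcon
    have h1 := hub n
    have h2 : CdN d (L n) ≤ CdN d b := hmonoC (by omega)
    omega
  -- L n ≥ 1 for n ≥ 2
  have hL1 : ∀ n, 2 ≤ n → 1 ≤ L n := by
    intro n hn
    by_contra hcon
    have h0 : L n = 0 := by omega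
    have := hub n
    rw [h0, CdN_zero d hd1] at this
    omega
  -- a n = lam (L n) for n ≥ 2
  have haL : ∀ n, 2 ≤ n → a n = lam (L n) := by
    intro n hn
    apply ha (L n) n _ (hub n)
    have h1 := hL1 n hn
    rw [if_neg (by omega)]
    exact hlb n (L n - 1) (by omega)
  -- the ratio u n = n / (L n)^d tends to 2/d!
  set u : ℕ → ℝ := fun n => (n : ℝ) / ((L n : ℕ) : ℝ) ^ d with hu_def
  have hGL : Tendsto (fun n => (CdN d (L n - 1) : ℝ) / ((L n : ℕ) : ℝ) ^ d) atTop
      (nhds (2 / (Nat.factorial d : ℝ))) := (CdN_ratio_pred d hd1).comp hLtop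
  have hHL : Tendsto (fun n => (CdN d (L n) : ℝ) / ((L n : ℕ) : ℝ) ^ d) atTop
      (nhds (2 / (Nat.factorial d : ℝ))) := (CdN_ratio d hd1).comp hLtop
  have hu : Tendsto u atTop (nhds (2 / (Nat.factorial d : ℝ))) := by
    apply tendsto_of_tendsto_of_tendsto_of_le_of_le' hGL hHL
    · filter_upwards [eventually_ge_atTop 2] with n hn
      have h1 := hL1 n hn
      have h2 : CdN d (L n - 1) < n := by
        rcases Nat.lt_or_ge (L n - 1) (L n) with h | h
        · exact hlb n (L n - 1) h
        · omega
      have hpos : (0 : ℝ) < ((L n : ℕ) : ℝ) ^ d := by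
        have : (0:ℝ) < ((L n : ℕ) : ℝ) := by exact_mod_cast h1
        positivity
      have hle : (CdN d (L n - 1) : ℝ) ≤ (n : ℝ) := by exact_mod_cast h2.le
      exact div_le_div_of_nonneg_right hle hpos.le
    · filter_upwards [eventually_ge_atTop 2] with n hn
      have h1 := hL1 n hn
      have hpos : (0 : ℝ) < ((L n : ℕ) : ℝ) ^ d := by
        have : (0:ℝ) < ((L n : ℕ) : ℝ) := by exact_mod_cast h1
        positivity
      have hle : (n : ℝ) ≤ (CdN d (L n) : ℝ) := by exact_mod_cast hub n
      exact div_le_div_of_nonneg_right hle hpos.le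
  -- v n = log n / log (L n) tends to d
  set v : ℕ → ℝ := fun n => Real.log (n : ℝ) / Real.log ((L n : ℕ) : ℝ) with hv_def
  have hlogL : Tendsto (fun n => Real.log ((L n : ℕ) : ℝ)) atTop atTop :=
    Real.tendsto_log_atTop.comp (tendsto_natCast_atTop_atTop.comp hLtop)
  have hinv : Tendsto (fun n => (Real.log ((L n : ℕ) : ℝ))⁻¹) atTop (nhds 0) :=
    hlogL.inv_tendsto_atTop
  have hlogu : Tendsto (fun n => Real.log (u n)) atTop
      (nhds (Real.log (2 / (Nat.factorial d : ℝ)))) :=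
    ((Real.continuousAt_log hc.ne').tendsto).comp hu
  have hv : Tendsto v atTop (nhds (d : ℝ)) := by
    have h0 : Tendsto (fun n => Real.log (u n) * (Real.log ((L n : ℕ) : ℝ))⁻¹ + (d : ℝ)) atTop
        (nhds (Real.log (2 / (Nat.factorial d : ℝ)) * 0 + (d : ℝ))) :=
      (hlogu.mul hinv).add tendsto_const_nhds
    rw [mul_zero, zero_add] at h0
    apply h0.congr'
    filter_upwards [eventually_ge_atTop 2, hLtop.eventually (eventually_ge_atTop 2)]
      with n hn hLn
    have hl : (2 : ℝ) ≤ ((L n : ℕ) : ℝ) := by exact_mod_cast hLn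
    have hlpos : (0 : ℝ) < ((L n : ℕ) : ℝ) := by linarith
    have hz : (0 : ℝ) < Real.log ((L n : ℕ) : ℝ) := Real.log_pos (by linarith)
    have hxpos : (0 : ℝ) < (n : ℝ) := by
      have : (2 : ℝ) ≤ (n : ℝ) := by exact_mod_cast hn
      linarith
    have hupos : 0 < u n := div_pos hxpos (by positivity)
    have hlogn : Real.log (n : ℝ) =
        Real.log (u n) + (d : ℝ) * Real.log ((L n : ℕ) : ℝ) := by
      have hxa : (n : ℝ) = u n * ((L n : ℕ) : ℝ) ^ d := by
        show (n : ℝ) = (n : ℝ) / ((L n : ℕ) : ℝ) ^ d * ((L n : ℕ) : ℝ) ^ d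
        field_simp
      rw [hxa, Real.log_mul hupos.ne' (by positivity), Real.log_pow]
    rw [hv_def]
    show Real.log (u n) * (Real.log ((L n : ℕ) : ℝ))⁻¹ + (d : ℝ) =
      Real.log (n : ℝ) / Real.log ((L n : ℕ) : ℝ)
    rw [hlogn]
    field_simp
  -- combine
  have hs : Tendsto (fun n => lam (L n) * ((L n : ℕ) : ℝ) ^ α *
      Real.log ((L n : ℕ) : ℝ) ^ β) atTop (nhds 1) := hlim.comp hLtop
  have hdR : (0 : ℝ) < (d : ℝ) := by exact_mod_cast (by omega : 0 < d)
  have hA : Tendsto (fun n => (u n) ^ (α / (d : ℝ))) atTop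
      (nhds ((2 / (Nat.factorial d : ℝ)) ^ (α / (d : ℝ)))) :=
    hu.rpow tendsto_const_nhds (Or.inl hc.ne')
  have hB : Tendsto (fun n => (v n) ^ β) atTop (nhds ((d : ℝ) ^ β)) :=
    hv.rpow tendsto_const_nhds (Or.inl hdR.ne')
  have hfin := (hA.mul hB).mul hs
  rw [mul_one] at hfin
  apply hfin.congr'
  filter_upwards [eventually_ge_atTop 2, hLtop.eventually (eventually_ge_atTop 2)]
    with n hn hLn
  have hl : (2 : ℝ) ≤ ((L n : ℕ) : ℝ) := by exact_mod_cast hLn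
  have hlpos : (0 : ℝ) < ((L n : ℕ) : ℝ) := by linarith
  have hz : (0 : ℝ) < Real.log ((L n : ℕ) : ℝ) := Real.log_pos (by linarith)
  have hx2 : (2 : ℝ) ≤ (n : ℝ) := by exact_mod_cast hn
  have hxpos : (0 : ℝ) < (n : ℝ) := by linarith
  have hw : (0 : ℝ) < Real.log (n : ℝ) := Real.log_pos (by linarith)
  have huE : (u n) ^ (α / (d : ℝ)) =
      (n : ℝ) ^ (α / (d : ℝ)) / ((L n : ℕ) : ℝ) ^ α := by
    rw [hu_def]
    show ((n : ℝ) / ((L n : ℕ) : ℝ) ^ d) ^ (α / (d : ℝ)) = _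
    rw [Real.div_rpow hxpos.le (by positivity)]
    congr 1
    rw [← Real.rpow_natCast ((L n : ℕ) : ℝ) d, ← Real.rpow_mul hlpos.le]
    congr 1
    field_simp
  have hvE : (v n) ^ β = Real.log (n : ℝ) ^ β / Real.log ((L n : ℕ) : ℝ) ^ β := by
    exact Real.div_rpow hw.le hz.le β
  rw [huE, hvE, haL n hn]
  have h1 : ((L n : ℕ) : ℝ) ^ α ≠ 0 := (Real.rpow_pos_of_pos hlpos α).ne'
  have h2 : Real.log ((L n : ℕ) : ℝ) ^ β ≠ 0 := (Real.rpow_pos_of_pos hz β).ne'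
  field_simp
end
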